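/- Let L ≥ 2, η > 0, and let x_1, ..., x_L ∈ R^D. Define g_1 = w (an arbitrary vector) and g_{ℓ+1} = g_ℓ − η·x_ℓ for ℓ = 1, ..., L−1. Then Σ_{ℓ=1}^{L} ||w − g_ℓ||² ≤ 3·η²·L·(L−1)·Σ_{ℓ=1}^{L} ||x_ℓ||². -/
import Mathlib

theorem stmt7 (d L : ℕ) (hL : 2 ≤ L) (η : ℝ) (hη : 0 < η)
    (w : EuclideanSpace ℝ (Fin d)) (x g : ℕ → EuclideanSpace ℝ (Fin d))
    (hg1 : g 1 = w)
    (hrec : ∀ ℓ, 1 ≤ ℓ → ℓ ≤ L - 1 → g (ℓ + 1) = g ℓ - η • x ℓ) :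
    ∑ ℓ ∈ Finset.Icc 1 L, ‖w - g ℓ‖ ^ 2
      ≤ 3 * η ^ 2 * L * ((L : ℝ) - 1) * ∑ ℓ ∈ Finset.Icc 1 L, ‖x ℓ‖ ^ 2 := by
  -- closed form for g
  have hform : ∀ ℓ, 1 ≤ ℓ → ℓ ≤ L → g ℓ = w - η • ∑ j ∈ Finset.Ico 1 ℓ, x j := by
    intro ℓ h1 h2
    induction ℓ with
    | zero => omega
    | succ n ih =>
      rcases Nat.eq_or_lt_of_le h1 with h | h
      · simp [← h, hg1]
      · have hn1 : 1 ≤ n := by omega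
        have hnL : n ≤ L - 1 := by omega
        rw [hrec n hn1 hnL, ih hn1 (by omega),
          Finset.sum_Ico_succ_top hn1, smul_add]
        abel
  set S := ∑ ℓ ∈ Finset.Icc 1 L, ‖x ℓ‖ ^ 2 with hS
  have hS0 : 0 ≤ S := Finset.sum_nonneg fun i _ => by positivity
  -- pointwise bound
  have hpt : ∀ ℓ ∈ Finset.Icc 1 L, ‖w - g ℓ‖ ^ 2 ≤ η ^ 2 * ((L : ℝ) - 1) * S := by
    intro ℓ hℓ
    rw [Finset.mem_Icc] at hℓ
    rw [hform ℓ hℓ.1 hℓ.2]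
    have : w - (w - η • ∑ j ∈ Finset.Ico 1 ℓ, x j) = η • ∑ j ∈ Finset.Ico 1 ℓ, x j := by
      abel
    rw [this, norm_smul]
    have hcs : ‖∑ j ∈ Finset.Ico 1 ℓ, x j‖ ^ 2
        ≤ ((L : ℝ) - 1) * S := by
      have h1 : ‖∑ j ∈ Finset.Ico 1 ℓ, x j‖ ≤ ∑ j ∈ Finset.Ico 1 ℓ, ‖x j‖ :=
        norm_sum_le _ _
      have h2 : (∑ j ∈ Finset.Ico 1 ℓ, ‖x j‖) ^ 2
          ≤ (Finset.Ico 1 ℓ).card * ∑ j ∈ Finset.Ico 1 ℓ, ‖x j‖ ^ 2 :=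
        sq_sum_le_card_mul_sum_sq
      have hcard : ((Finset.Ico 1 ℓ).card : ℝ) ≤ (L : ℝ) - 1 := by
        rw [Nat.card_Ico]
        have : ℓ - 1 ≤ L - 1 := by omega
        have := Nat.cast_le (α := ℝ).2 this
        calc ((ℓ - 1 : ℕ) : ℝ) ≤ ((L - 1 : ℕ) : ℝ) := this
          _ = (L : ℝ) - 1 := by
            rw [Nat.cast_sub (by omega)]; simp
      have hsub : ∑ j ∈ Finset.Ico 1 ℓ, ‖x j‖ ^ 2 ≤ S := by
        apply Finset.sum_le_sum_of_subset_of_nonneg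
        · intro j hj; rw [Finset.mem_Ico] at hj; rw [Finset.mem_Icc]; omega
        · intro i _ _; positivity
      have hsum0 : 0 ≤ ∑ j ∈ Finset.Ico 1 ℓ, ‖x j‖ ^ 2 :=
        Finset.sum_nonneg fun i _ => by positivity
      calc ‖∑ j ∈ Finset.Ico 1 ℓ, x j‖ ^ 2 ≤ (∑ j ∈ Finset.Ico 1 ℓ, ‖x j‖) ^ 2 := by
            apply pow_le_pow_left₀ (norm_nonneg _) h1
        _ ≤ (Finset.Ico 1 ℓ).card * ∑ j ∈ Finset.Ico 1 ℓ, ‖x j‖ ^ 2 := h2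
        _ ≤ ((L : ℝ) - 1) * S := by
            apply mul_le_mul hcard hsub hsum0
            linarith [(Nat.one_le_cast (α := ℝ)).2 (by omega : 1 ≤ L)]
    calc (‖η‖ * ‖∑ j ∈ Finset.Ico 1 ℓ, x j‖) ^ 2
        = η ^ 2 * ‖∑ j ∈ Finset.Ico 1 ℓ, x j‖ ^ 2 := by
          rw [mul_pow, Real.norm_eq_abs, sq_abs]
      _ ≤ η ^ 2 * (((L : ℝ) - 1) * S) := by
          apply mul_le_mul_of_nonneg_left hcs (by positivity)
      _ = η ^ 2 * ((L : ℝ) - 1) * S := by ring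
  have hsum : ∑ ℓ ∈ Finset.Icc 1 L, ‖w - g ℓ‖ ^ 2
      ≤ (L : ℝ) * (η ^ 2 * ((L : ℝ) - 1) * S) := by
    calc ∑ ℓ ∈ Finset.Icc 1 L, ‖w - g ℓ‖ ^ 2
        ≤ ∑ ℓ ∈ Finset.Icc 1 L, (η ^ 2 * ((L : ℝ) - 1) * S) :=
          Finset.sum_le_sum hpt
      _ = (Finset.Icc 1 L).card * (η ^ 2 * ((L : ℝ) - 1) * S) := by
          rw [Finset.sum_const, nsmul_eq_mul]
      _ = (L : ℝ) * (η ^ 2 * ((L : ℝ) - 1) * S) := by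
          rw [Nat.card_Icc]; norm_num
  have hL1 : (1 : ℝ) ≤ (L : ℝ) - 1 := by
    have h2L : (2:ℝ) ≤ (L:ℝ) := by exact_mod_cast hL
    linarith
  nlinarith [mul_pos (mul_pos (pow_pos hη 2) (by positivity : (0:ℝ) < (L:ℝ))) (lt_of_lt_of_le one_pos hL1)]
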